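/- The assignment a1 ↦ 0, a2 ↦ ε, b1 ↦ 2ε defines a surjective ℚ-algebra homomorphism ℚ[a1, a2, b1]/(b1 − 2a2 + a1², a2² − b1·(2a2 − a1²), a2²·b1 − a1) → ℚ[ε]/(ε²); i.e. the three relations vanish under this assignment in ℚ[ε]/(ε²). -/

import Mathlib

/-! Since `ε² = 0`, evaluation at `(a1, a2, b1) = (0, ε, 2ε)` kills the three relations and so
descends to the quotient; its image contains `ε`, and `ℚ` together with `ε` spans `ℚ[ε]`. -/

open MvPolynomial

noncomputable def smallQH_IG26' : Type :=
  MvPolynomial (Fin 3) ℚ ⧸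
    Ideal.span {(X 2 : MvPolynomial (Fin 3) ℚ) - 2 * X 1 + (X 0) ^ 2,
      (X 1) ^ 2 - X 2 * (2 * X 1 - (X 0) ^ 2),
      (X 1) ^ 2 * X 2 - X 0}

noncomputable instance : CommRing smallQH_IG26' := Ideal.Quotient.commRing _
noncomputable instance : Algebra ℚ smallQH_IG26' := Ideal.Quotient.algebra ℚ

open DualNumber

/-- Every dual number is `x.fst + x.snd • ε`, so a hit on `ε` gives all of `R[ε]`. -/
theorem DualNumber.surjective_of_exists_apply_eq_eps {R A : Type*} [CommSemiring R] [Semiring A]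
    [Algebra R A] (f : A →ₐ[R] R[ε]) (hε : ∃ a, f a = ε) : Function.Surjective f := by
  obtain ⟨a, ha⟩ := hε
  intro x
  refine ⟨algebraMap R A x.fst + x.snd • a, ?_⟩
  rw [map_add, AlgHom.commutes, map_smul, ha, ← inr_eq_smul_eps, TrivSqZeroExt.algebraMap_eq_inl,
    TrivSqZeroExt.inl_fst_add_inr_snd_eq]

theorem relations_at_fat_point {R : Type*} [CommRing R] :
    (2 * ε : R[ε]) - 2 * ε + (0 : R[ε]) ^ 2 = 0 ∧
      (ε : R[ε]) ^ 2 - 2 * ε * (2 * ε - (0 : R[ε]) ^ 2) = 0 ∧ (ε : R[ε]) ^ 2 * (2 * ε) - 0 = 0 := by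
  refine ⟨by ring, ?_, ?_⟩
  · linear_combination (-3 : R[ε]) * eps_pow_two (R := R)
  · linear_combination (2 * ε : R[ε]) * eps_pow_two (R := R)

noncomputable def fatPointEval : MvPolynomial (Fin 3) ℚ →ₐ[ℚ] ℚ[ε] :=
  aeval ![0, ε, 2 * ε]

theorem fatPointEval_apply_of_mem_relations (p : MvPolynomial (Fin 3) ℚ)
    (hp : p ∈ Ideal.span {(X 2 : MvPolynomial (Fin 3) ℚ) - 2 * X 1 + (X 0) ^ 2,
      (X 1) ^ 2 - X 2 * (2 * X 1 - (X 0) ^ 2),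
      (X 1) ^ 2 * X 2 - X 0}) :
    fatPointEval p = 0 := by
  refine (Ideal.span_le (I := RingHom.ker fatPointEval)).2 ?_ hp
  obtain ⟨h₁, h₂, h₃⟩ := relations_at_fat_point (R := ℚ)
  simp only [Set.insert_subset_iff, Set.singleton_subset_iff, SetLike.mem_coe, RingHom.mem_ker,
    fatPointEval, map_sub, map_add, map_mul, map_pow, map_ofNat, aeval_X]
  exact ⟨h₁, h₂, h₃⟩

noncomputable def smallQH_IG26'.toFatPoint : smallQH_IG26' →ₐ[ℚ] ℚ[ε] :=
  Ideal.Quotient.liftₐ _ fatPointEval fatPointEval_apply_of_mem_relations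

theorem smallQH_IG26'.toFatPoint_mk (p : MvPolynomial (Fin 3) ℚ) :
    smallQH_IG26'.toFatPoint (Ideal.Quotient.mk _ p) = fatPointEval p :=
  rfl

/-- The fat point of `QH(IG(2,6))`: the assignment `a1 ↦ 0, a2 ↦ ε, b1 ↦ 2ε` kills the
three relations, hence yields a surjective `ℚ`-algebra map onto `ℚ[ε]/(ε²)`. -/
theorem IG26_fat_point_surjection :
    (let a1 : DualNumber ℚ := 0
     let a2 : DualNumber ℚ := DualNumber.eps
     let b1 : DualNumber ℚ := 2 * DualNumber.eps
     b1 - 2 * a2 + a1 ^ 2 = 0 ∧ a2 ^ 2 - b1 * (2 * a2 - a1 ^ 2) = 0 ∧ a2 ^ 2 * b1 - a1 = 0) ∧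
    ∃ f : smallQH_IG26' →ₐ[ℚ] DualNumber ℚ, Function.Surjective f ∧
      f (Ideal.Quotient.mk _ (X 0)) = 0 ∧
      f (Ideal.Quotient.mk _ (X 1)) = DualNumber.eps ∧
      f (Ideal.Quotient.mk _ (X 2)) = 2 * DualNumber.eps := by
  have h₀ : smallQH_IG26'.toFatPoint (Ideal.Quotient.mk _ (X 0)) = 0 := by
    simp [smallQH_IG26'.toFatPoint_mk, fatPointEval]
  have h₁ : smallQH_IG26'.toFatPoint (Ideal.Quotient.mk _ (X 1)) = ε := by
    simp [smallQH_IG26'.toFatPoint_mk, fatPointEval]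
  have h₂ : smallQH_IG26'.toFatPoint (Ideal.Quotient.mk _ (X 2)) = 2 * ε := by
    simp [smallQH_IG26'.toFatPoint_mk, fatPointEval]
  exact ⟨relations_at_fat_point, smallQH_IG26'.toFatPoint,
    surjective_of_exists_apply_eq_eps _ ⟨_, h₁⟩, h₀, h₁, h₂⟩
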